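/- arXiv:2502.14690 — 2 statements merged into one kernel-verified Lean document; each statement's English description precedes it below -/
import Mathlib

section
/- Consider the RRC market with students {s1,s2,s3}, colleges {c1,c2,c3}, one non-empty resource r with region C_r = {c1,c2,c3}, quotas q_{c1} = q_{c2} = q_{c3} = q_r = 1, student preferences s1: (c1,r) ≻ (c1,r0) ≻ (c3,r) ≻ (c2,r) ≻ (c3,r0) ≻ (c2,r0) ≻ ∅, s2: (c3,r) ≻ (c2,r) ≻ (c1,r) ≻ (c2,r0) ≻ (c3,r0) ≻ (c1,r0) ≻ ∅, s3: (c1,r) ≻ (c3,r) ≻ (c1,r0) ≻ (c2,r) ≻ ∅ (all other pairs unacceptable), and college priorities c1: s2 ≻ s3 ≻ s1, c2: s2 ≻ s3 ≻ s1, c3: s3 ≻ s2 ≻ s1. Then this market has exactly two direct-envy stable matchings, μ1 = {(s1,c3,r0),(s2,c2,r),(s3,c1,r0)} and μ2 = {(s1,c1,r0),(s2,c2,r0),(s3,c3,r)}, and neither μ1 nor μ2 is envy-free; consequently, no matching in this market is both direct-envy stable and envy-free. -/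
namespace RRC

section Defs

variable (S C R : Type)

/-- A matching market with resource-regional caps (RRC).  Students `S`, colleges `C`,
non-empty resources `R`; the empty resource `r0` is represented by `none : Option R`. -/
structure Market where
  /-- quota of each college -/
  qC : C → ℕ
  qC_pos : ∀ c, 0 < qC c
  /-- quota of each non-empty resource -/
  qR : R → ℕ
  qR_pos : ∀ r, 0 < qR r
  /-- region of each non-empty resource (the region of `r0` is all of `C`) -/
  region : R → Finset C
  region_nonempty : ∀ r, (region r).Nonempty
  /-- strict priority order of each college over students -/
  prC : C → S → S → Prop
  prC_sto : ∀ c, IsStrictTotalOrder S (prC c)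
  /-- strict preference order of each student over `(C × R0) ∪ {∅}`;
  `none` is the outside option `∅` -/
  prS : S → Option (C × Option R) → Option (C × Option R) → Prop
  prS_sto : ∀ s, IsStrictTotalOrder (Option (C × Option R)) (prS s)

/-- A matching: each student appears in at most one contract, so a matching is a
function from students to optional (college, resource) pairs. -/
abbrev Matching := S → Option (C × Option R)

variable {S C R} [DecidableEq S]

/-- Number of contracts of the college `c` in `μ`. -/
noncomputable def collegeCount (μ : Matching S C R) (c : C) : ℕ :=
  {s : S | ∃ r, μ s = some (c, r)}.ncard

/-- Number of contracts containing the non-empty resource `r` in `μ`. -/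
noncomputable def resourceCount (μ : Matching S C R) (r : R) : ℕ :=
  {s : S | ∃ c, μ s = some (c, some r)}.ncard

/-- Feasibility: college quotas, resource quotas, and regions are respected. -/
def Feasible (M : Market S C R) (μ : Matching S C R) : Prop :=
  (∀ c, collegeCount μ c ≤ M.qC c) ∧
  (∀ r, resourceCount μ r ≤ M.qR r) ∧
  (∀ s c r, μ s = some (c, some r) → c ∈ M.region r)

/-- A pair `(c, r)` is acceptable for `s` if `s` prefers it to being unmatched. -/
def Acceptable (M : Market S C R) (s : S) (c : C) (r : Option R) : Prop :=
  M.prS s (some (c, r)) none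

/-- Individual rationality: no unacceptable contract is used. -/
def IndRational (M : Market S C R) (μ : Matching S C R) : Prop :=
  ∀ s x, μ s = some x → M.prS s (some x) none

/-- The contract `(s, c, r) ∉ μ` envy-blocks `μ` through `(s', c, r') ∈ μ`. -/
def EnvyBlocksThrough (M : Market S C R) (μ : Matching S C R)
    (s : S) (c : C) (r : Option R) (s' : S) (r' : Option R) : Prop :=
  μ s ≠ some (c, r) ∧ μ s' = some (c, r') ∧
  M.prS s (some (c, r)) (μ s) ∧ M.prC c s s' ∧
  Feasible M (Function.update (Function.update μ s' none) s (some (c, r)))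

def EnvyBlocks (M : Market S C R) (μ : Matching S C R)
    (s : S) (c : C) (r : Option R) : Prop :=
  ∃ s' r', EnvyBlocksThrough M μ s c r s' r'

def EnvyFree (M : Market S C R) (μ : Matching S C R) : Prop :=
  ∀ s c r, ¬ EnvyBlocks M μ s c r

/-- The contract `(s, c, r) ∉ μ` waste-blocks `μ`. -/
def WasteBlocks (M : Market S C R) (μ : Matching S C R)
    (s : S) (c : C) (r : Option R) : Prop :=
  μ s ≠ some (c, r) ∧ M.prS s (some (c, r)) (μ s) ∧
  Feasible M (Function.update μ s (some (c, r)))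

def NonWasteful (M : Market S C R) (μ : Matching S C R) : Prop :=
  ∀ s c r, ¬ WasteBlocks M μ s c r

/-- Stability: feasible, individually rational, no envy-blocking and no
waste-blocking contract. -/
def Stable (M : Market S C R) (μ : Matching S C R) : Prop :=
  Feasible M μ ∧ IndRational M μ ∧ EnvyFree M μ ∧ NonWasteful M μ

/-- `(s, c, r)` direct-envy-blocks `μ`: it envy-blocks through some `(s', c, r')`
with `r ∈ {r', r0}`. -/
def DirectEnvyBlocks (M : Market S C R) (μ : Matching S C R)
    (s : S) (c : C) (r : Option R) : Prop :=
  ∃ s' r', EnvyBlocksThrough M μ s c r s' r' ∧ (r = r' ∨ r = none)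

/-- The waste-blocking contract `(s, c, r)` is dominated by `(s', c, r') ∉ μ`. -/
def Dominates (M : Market S C R) (μ : Matching S C R)
    (s : S) (c : C) (r : Option R) (s' : S) (r' : Option R) : Prop :=
  μ s' ≠ some (c, r') ∧
  ¬ WasteBlocks M μ s' c r' ∧ ¬ DirectEnvyBlocks M μ s' c r' ∧
  DirectEnvyBlocks M (Function.update μ s (some (c, r))) s' c r'

/-- Direct-envy stability: feasible, individually rational, no direct-envy-blocking
contract, and every waste-blocking contract is dominated. -/
def DirectEnvyStable (M : Market S C R) (μ : Matching S C R) : Prop :=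
  Feasible M μ ∧ IndRational M μ ∧
  (∀ s c r, ¬ DirectEnvyBlocks M μ s c r) ∧
  (∀ s c r, WasteBlocks M μ s c r → ∃ s' r', Dominates M μ s c r s' r')

/-- Weak stability: no direct-envy-blocking contract, and every waste-blocking
contract involves a non-empty resource whose quota is fully used. -/
def WeaklyStable (M : Market S C R) (μ : Matching S C R) : Prop :=
  Feasible M μ ∧ IndRational M μ ∧
  (∀ s c r, ¬ DirectEnvyBlocks M μ s c r) ∧
  (∀ s c (r : Option R), WasteBlocks M μ s c r →
    ∃ r₁, r = some r₁ ∧ resourceCount μ r₁ = M.qR r₁)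

/-- A waste-blocking contract is resource-blocking if the student is already
admitted to the same college. -/
def ResourceBlocks (M : Market S C R) (μ : Matching S C R)
    (s : S) (c : C) (r : Option R) : Prop :=
  WasteBlocks M μ s c r ∧ ∃ r', μ s = some (c, r')

/-- A waste-blocking contract is seat-blocking if the student is not admitted to
the same college. -/
def SeatBlocks (M : Market S C R) (μ : Matching S C R)
    (s : S) (c : C) (r : Option R) : Prop :=
  WasteBlocks M μ s c r ∧ ¬ ∃ r', μ s = some (c, r')

def ResourceEfficient (M : Market S C R) (μ : Matching S C R) : Prop :=
  ∀ s c r, ¬ ResourceBlocks M μ s c r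

def SeatEfficient (M : Market S C R) (μ : Matching S C R) : Prop :=
  ∀ s c r, ¬ SeatBlocks M μ s c r

end Defs

section Cutoffs

variable {S C R : Type} [Fintype S]

/-- A cutoff profile: one cutoff per (college, resource) pair, bounded by the
number of students, with the cutoff for the empty resource the largest. -/
def IsCutoffProfile (St : Type) [Fintype St] {Co Re : Type}
    (K : Co → Option Re → ℕ) : Prop :=
  (∀ c r, K c r ≤ Fintype.card St) ∧ ∀ c (r : Re), K c (some r) ≤ K c none

/-- Rank of student `s` in the priority order of college `c` (0 = best). -/
noncomputable def studentRank (M : Market S C R) (c : C) (s : S) : ℕ :=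
  {s' : S | M.prC c s' s}.ncard

/-- `(s, c, r)` is permitted by the cutoff profile `K` if `s` is among the top
`K c r` students of `c`'s priority order. -/
noncomputable def Permitted (M : Market S C R) (K : C → Option R → ℕ)
    (s : S) (c : C) (r : Option R) : Prop :=
  studentRank M c s < K c r

/-- `μ` is the matching induced by the cutoff profile `K`: every student gets
their most preferred acceptable permitted contract, if any. -/
def IsInduced (M : Market S C R) (K : C → Option R → ℕ) (μ : Matching S C R) : Prop :=
  ∀ s : S,
    (∀ c r, μ s = some (c, r) →
      Permitted M K s c r ∧ Acceptable M s c r ∧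
      ∀ c' r', Permitted M K s c' r' → Acceptable M s c' r' →
        (c', r') ≠ (c, r) → M.prS s (some (c, r)) (some (c', r'))) ∧
    (μ s = none → ∀ c r, ¬ (Permitted M K s c r ∧ Acceptable M s c r))

/-- `K + 1_r^c`: increase the cutoff of `(c, r)` by one (simultaneously increasing
the cutoff of `(c, r0)` if it was equal to that of `(c, r)`). -/
def bump [DecidableEq C] [DecidableEq R] (K : C → Option R → ℕ)
    (c : C) (r : Option R) : C → Option R → ℕ :=
  fun c' r' =>
    if c' = c ∧ (r' = r ∨ (r' = none ∧ r ≠ none ∧ K c none = K c r)) then K c' r' + 1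
    else K c' r'

/-- An optimal cutoff profile: the induced matching is feasible, and increasing any
non-maximal cutoff yields an infeasible induced matching. -/
def OptimalCutoffs [DecidableEq C] [DecidableEq R]
    (M : Market S C R) (K : C → Option R → ℕ) : Prop :=
  IsCutoffProfile S K ∧
  (∀ μ, IsInduced M K μ → Feasible M μ) ∧
  ∀ c r, K c r < Fintype.card S →
    ∀ μ', IsInduced M (bump K c r) μ' → ¬ Feasible M μ'

end Cutoffs

section SD

variable {S C R : Type} [DecidableEq S]

/-- `x` is the most preferred contract of the (unmatched) student `s` given the
current matching `μ`: the best acceptable contract keeping the matching feasible,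
or `none` if there is no such contract. -/
def BestChoice (M : Market S C R) (μ : Matching S C R) (s : S)
    (x : Option (C × Option R)) : Prop :=
  match x with
  | some (c, r) =>
      Acceptable M s c r ∧ Feasible M (Function.update μ s (some (c, r))) ∧
      ∀ c' r', Acceptable M s c' r' → Feasible M (Function.update μ s (some (c', r'))) →
        (c', r') = (c, r) ∨ M.prS s (some (c, r)) (some (c', r'))
  | none => ∀ c r, ¬ (Acceptable M s c r ∧ Feasible M (Function.update μ s (some (c, r))))

/-- A run of the serial dictatorship mechanism on a list of students:
`SDRun M l μ μ'` holds if starting from `μ` and processing the students of `l`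
in order, each one receiving their most preferred feasible acceptable contract,
yields `μ'`. -/
inductive SDRun (M : Market S C R) : List S → Matching S C R → Matching S C R → Prop
  | nil (μ : Matching S C R) : SDRun M [] μ μ
  | cons (s : S) (l : List S) (μ : Matching S C R) (x : Option (C × Option R))
      (μ' : Matching S C R) (hx : BestChoice M μ s x)
      (h : SDRun M l (Function.update μ s x) μ') : SDRun M (s :: l) μ μ'

/-- Student `s` weakly prefers `x` to `y`. -/
def WeaklyPrefers (M : Market S C R) (s : S) (x y : Option (C × Option R)) : Prop :=
  x = y ∨ M.prS s x y

/-- Pareto efficiency for students. -/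
def ParetoEfficient (M : Market S C R) (μ : Matching S C R) : Prop :=
  ¬ ∃ μ' : Matching S C R, Feasible M μ' ∧
    (∀ s, WeaklyPrefers M s (μ' s) (μ s)) ∧ ∃ s, M.prS s (μ' s) (μ s)

end SD

/-- A strict total order induced by an injective rank function (rank 0 = best). -/
lemma isStrictTotalOrder_of_rank {α : Type*} (f : α → ℕ) (hf : Function.Injective f) :
    IsStrictTotalOrder α (fun x y => f x < f y) where
  trichotomous a b := by
    intro h1 h2
    exact hf (Nat.le_antisymm (Nat.not_lt.mp h2) (Nat.not_lt.mp h1))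
  irrefl a := lt_irrefl (f a)
  trans a b c h1 h2 := lt_trans h1 h2

end RRC

namespace RRC

namespace Example4

/-! The market of Proposition 3 (impossibility of envy-freeness): students
`s1 = 0`, `s2 = 1`, `s3 = 2`; colleges `c1 = 0`, `c2 = 1`, `c3 = 2`; one non-empty
resource `r = some ()` whose region contains all three colleges; all quotas one.
Preferences (best first):
* `s1 : (c1,r), (c1,r0), (c3,r), (c2,r), (c3,r0), (c2,r0), ∅`;
* `s2 : (c3,r), (c2,r), (c1,r), (c2,r0), (c3,r0), (c1,r0), ∅`;
* `s3 : (c1,r), (c3,r), (c1,r0), (c2,r), ∅`;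
* `c1 : s2, s3, s1`;  `c2 : s2, s3, s1`;  `c3 : s3, s2, s1`. -/

/-- Rank of each pair/outside option for each student (0 = best; values above the
rank of `∅` correspond to unacceptable pairs). -/
def rkS : Fin 3 → Option (Fin 3 × Option Unit) → ℕ := fun s x =>
  if s = 0 then
    if x = some (0, some ()) then 0
    else if x = some (0, none) then 1
    else if x = some (2, some ()) then 2
    else if x = some (1, some ()) then 3
    else if x = some (2, none) then 4
    else if x = some (1, none) then 5
    else 6
  else if s = 1 then
    if x = some (2, some ()) then 0
    else if x = some (1, some ()) then 1
    else if x = some (0, some ()) then 2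
    else if x = some (1, none) then 3
    else if x = some (2, none) then 4
    else if x = some (0, none) then 5
    else 6
  else
    if x = some (0, some ()) then 0
    else if x = some (2, some ()) then 1
    else if x = some (0, none) then 2
    else if x = some (1, some ()) then 3
    else if x = none then 4
    else if x = some (1, none) then 5
    else 6

/-- Rank of each student for each college (0 = best). -/
def rkC : Fin 3 → Fin 3 → ℕ := fun c s =>
  if c = 2 then 2 - (s : ℕ)                        -- c3 : s3 ≻ s2 ≻ s1
  else if s = 1 then 0 else if s = 2 then 1 else 2 -- c1, c2 : s2 ≻ s3 ≻ s1

lemma rkS_inj : ∀ s, Function.Injective (rkS s) := by decide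
lemma rkC_inj : ∀ c, Function.Injective (rkC c) := by decide

/-- The RRC market of Proposition 3. -/
def mkt : Market (Fin 3) (Fin 3) Unit where
  qC := fun _ => 1
  qC_pos := fun _ => Nat.one_pos
  qR := fun _ => 1
  qR_pos := fun _ => Nat.one_pos
  region := fun _ => Finset.univ
  region_nonempty := fun _ => Finset.univ_nonempty
  prC := fun c s s' => rkC c s < rkC c s'
  prC_sto := fun c => isStrictTotalOrder_of_rank (rkC c) (rkC_inj c)
  prS := fun s x y => rkS s x < rkS s y
  prS_sto := fun s => isStrictTotalOrder_of_rank (rkS s) (rkS_inj s)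

/-- The matching `μ1 = {(s1,c3,r0), (s2,c2,r), (s3,c1,r0)}`. -/
def μ1 : Matching (Fin 3) (Fin 3) Unit := fun s =>
  if s = 0 then some (2, none)
  else if s = 1 then some (1, some ())
  else some (0, none)

/-- The matching `μ2 = {(s1,c1,r0), (s2,c2,r0), (s3,c3,r)}`. -/
def μ2 : Matching (Fin 3) (Fin 3) Unit := fun s =>
  if s = 0 then some (0, none)
  else if s = 1 then some (1, none)
  else some (2, some ())

end Example4

/-! All the stability notions are decidable in a finite market with decidable preferences and
priorities, so every claim about the example is a finite check. What makes the example work is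
an envy that is not direct. In `μ1`, student `s2` claims `(c3, r)` from `s1`, who holds
`(c3, r0)`; the move is feasible because it frees the unit of `r` that `s2` held at `c2`. In
`μ2`, student `s3` claims `(c1, r)` from `s1`, who holds `(c1, r0)`, freeing the `r` that `s3`
held at `c3`. Direct-envy stability ignores such envies, and an exhaustive search over the
`7 ^ 3` matchings shows that `μ1` and `μ2` are the only direct-envy stable ones. -/

section Decidability

variable {S C R : Type} [Fintype S]

lemma collegeCount_eq_card [DecidableEq C] [Fintype R] [DecidableEq R]
    (μ : Matching S C R) (c : C) :
    collegeCount μ c = (Finset.univ.filter fun s => ∃ r, μ s = some (c, r)).card := by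
  rw [collegeCount, ← Set.ncard_coe_finset, Finset.coe_filter_univ]

lemma resourceCount_eq_card [Fintype C] [DecidableEq C] [DecidableEq R]
    (μ : Matching S C R) (r : R) :
    resourceCount μ r = (Finset.univ.filter fun s => ∃ c, μ s = some (c, some r)).card := by
  rw [resourceCount, ← Set.ncard_coe_finset, Finset.coe_filter_univ]

variable [Fintype C] [DecidableEq C] [Fintype R] [DecidableEq R]

instance (M : Market S C R) (μ : Matching S C R) : Decidable (Feasible M μ) :=
  decidable_of_iff
    ((∀ c, (Finset.univ.filter fun s => ∃ r, μ s = some (c, r)).card ≤ M.qC c) ∧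
     (∀ r, (Finset.univ.filter fun s => ∃ c, μ s = some (c, some r)).card ≤ M.qR r) ∧
     (∀ s c r, μ s = some (c, some r) → c ∈ M.region r))
    (by simp only [Feasible, collegeCount_eq_card, resourceCount_eq_card])

variable [DecidableEq S] (M : Market S C R) [∀ s, DecidableRel (M.prS s)]
  [∀ c, DecidableRel (M.prC c)] (μ : Matching S C R)

instance : Decidable (IndRational M μ) := by
  unfold IndRational; infer_instance

instance (s c r s' r') : Decidable (EnvyBlocksThrough M μ s c r s' r') := by
  unfold EnvyBlocksThrough; infer_instance

instance : Decidable (EnvyFree M μ) := by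
  unfold EnvyFree EnvyBlocks; infer_instance

instance (s c r) : Decidable (DirectEnvyBlocks M μ s c r) := by
  unfold DirectEnvyBlocks; infer_instance

instance (s c r) : Decidable (WasteBlocks M μ s c r) := by
  unfold WasteBlocks; infer_instance

instance (s c r s' r') : Decidable (Dominates M μ s c r s' r') := by
  unfold Dominates; infer_instance

instance : Decidable (DirectEnvyStable M μ) := by
  unfold DirectEnvyStable; infer_instance

end Decidability

namespace Example4

instance (s : Fin 3) : DecidableRel (mkt.prS s) :=
  fun x y => inferInstanceAs (Decidable (rkS s x < rkS s y))

instance (c : Fin 3) : DecidableRel (mkt.prC c) :=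
  fun s s' => inferInstanceAs (Decidable (rkC c s < rkC c s'))

lemma directEnvyStable_μ1 : DirectEnvyStable mkt μ1 := by decide

lemma directEnvyStable_μ2 : DirectEnvyStable mkt μ2 := by decide

set_option maxRecDepth 10000 in
lemma eq_μ1_or_eq_μ2_of_directEnvyStable (μ : Matching (Fin 3) (Fin 3) Unit)
    (h : DirectEnvyStable mkt μ) : μ = μ1 ∨ μ = μ2 := by
  revert μ
  decide

lemma directEnvyStable_iff (μ : Matching (Fin 3) (Fin 3) Unit) :
    DirectEnvyStable mkt μ ↔ μ = μ1 ∨ μ = μ2 :=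
  ⟨eq_μ1_or_eq_μ2_of_directEnvyStable μ, by
    rintro (rfl | rfl)
    exacts [directEnvyStable_μ1, directEnvyStable_μ2]⟩

lemma envyBlocksThrough_μ1 : EnvyBlocksThrough mkt μ1 1 2 (some ()) 0 none := by decide

lemma envyBlocksThrough_μ2 : EnvyBlocksThrough mkt μ2 2 0 (some ()) 0 none := by decide

lemma not_envyFree_μ1 : ¬ EnvyFree mkt μ1 :=
  fun h => h 1 2 (some ()) ⟨0, none, envyBlocksThrough_μ1⟩

lemma not_envyFree_μ2 : ¬ EnvyFree mkt μ2 :=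
  fun h => h 2 0 (some ()) ⟨0, none, envyBlocksThrough_μ2⟩

/-- `μ1` and `μ2` are exactly the direct-envy stable matchings of
this market, neither of them is envy-free, and consequently no matching of this
market is both direct-envy stable and envy-free. -/
theorem two_directEnvyStable_none_envyFree :
    (∀ μ : Matching (Fin 3) (Fin 3) Unit,
      DirectEnvyStable mkt μ ↔ (μ = μ1 ∨ μ = μ2)) ∧
    ¬ EnvyFree mkt μ1 ∧ ¬ EnvyFree mkt μ2 ∧
    (∀ μ : Matching (Fin 3) (Fin 3) Unit,
      ¬ (DirectEnvyStable mkt μ ∧ EnvyFree mkt μ)) := by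
  refine ⟨directEnvyStable_iff, not_envyFree_μ1, not_envyFree_μ2, ?_⟩
  rintro μ ⟨hstable, henvyFree⟩
  rcases (directEnvyStable_iff μ).1 hstable with rfl | rfl
  exacts [not_envyFree_μ1 henvyFree, not_envyFree_μ2 henvyFree]

end Example4

end RRC
end

section
/- In any RRC market, for every direct-envy stable matching μ there exists exactly one optimal cutoff profile K such that μ(K) = μ. -/
/-!
The optimal cutoffs are forced: `K_r^c` must be the rank at `c` of the highest-priority student
who strictly prefers `(c, r)` or `(c, r0)` to their assignment in `μ` (or `|S|` if nobody does).
A profile inducing `μ` lies below these values, since otherwise such a student would be permitted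
and would move; an optimal one cannot lie strictly below, since raising it would still induce `μ`.
Conversely, direct-envy freeness makes these cutoffs induce `μ`, and raising one of them lets only
the student at the cutoff move, to a contract they demand. If the result were feasible, that
contract would waste-block `μ`, and its domination requires a higher-priority student demanding
the same contract, which the choice of the cutoff excludes.
-/

namespace RRC

variable {S C R : Type}

section Orders

instance (M : Market S C R) (c : C) : IsStrictTotalOrder S (M.prC c) := M.prC_sto c

instance (M : Market S C R) (s : S) : IsStrictTotalOrder (Option (C × Option R)) (M.prS s) :=
  M.prS_sto s

variable (M : Market S C R) {c : C}

lemma studentRank_lt_of_prC [Finite S] {a b : S} (h : M.prC c a b) :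
    studentRank M c a < studentRank M c b :=
  Set.ncard_lt_ncard ((Set.ssubset_iff_of_subset fun _ hx => trans_of (M.prC c) hx h).mpr
    ⟨a, h, irrefl_of (M.prC c) a⟩)

lemma studentRank_lt_card [Fintype S] (s : S) : studentRank M c s < Fintype.card S := by
  rw [← Nat.card_eq_fintype_card]
  exact Set.ncard_lt_card fun h => irrefl_of (M.prC c) s (h.symm ▸ Set.mem_univ s :)

lemma studentRank_injective [Finite S] : Function.Injective (studentRank M c) := by
  intro a b h
  rcases trichotomous_of (M.prC c) a b with h' | h' | h'
  · exact absurd h (studentRank_lt_of_prC M h').ne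
  · exact h'
  · exact absurd h (studentRank_lt_of_prC M h').ne'

end Orders

section UpdateCount

variable {α β : Type*} [DecidableEq α] (f : α → β) (P : β → Prop) (a : α) {y : β}

lemma setOf_update_subset_insert :
    {t | P (Function.update f a y t)} ⊆ insert a {t | P (f t)} := by
  intro t ht
  rcases eq_or_ne t a with rfl | hne
  · exact Set.mem_insert t _
  · exact Set.mem_insert_of_mem a (by simpa [Function.update_of_ne hne] using ht)

lemma setOf_update_subset (h : P y → P (f a)) :
    {t | P (Function.update f a y t)} ⊆ {t | P (f t)} := by
  intro t ht
  rcases eq_or_ne t a with rfl | hne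
  · exact h (by simpa using ht)
  · simpa [Function.update_of_ne hne] using ht

lemma insert_setOf_subset_update (h : P y) :
    insert a {t | P (f t)} ⊆ {t | P (Function.update f a y t)} := by
  rintro t (rfl | ht)
  · simpa using h
  · rcases eq_or_ne t a with rfl | hne
    · simpa using h
    · simpa [Function.update_of_ne hne] using ht

lemma setOf_update_eq_diff (h : ¬ P y) :
    {t | P (Function.update f a y t)} = {t | P (f t)} \ {a} := by
  ext t
  rcases eq_or_ne t a with rfl | hne
  · simpa using h
  · simp [hne]

lemma ncard_setOf_update_update_le [Finite α] {b : α} {z : β} (hz : ¬ P z)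
    (hy : P y → P (f a)) :
    {t | P (Function.update (Function.update f a z) b y t)}.ncard ≤ {t | P (f t)}.ncard := by
  by_cases hPy : P y
  · calc _ ≤ (insert b ({t | P (f t)} \ {a})).ncard := by
          refine Set.ncard_le_ncard ?_
          rw [← setOf_update_eq_diff f P a hz]
          exact setOf_update_subset_insert _ P b
      _ ≤ ({t | P (f t)} \ {a}).ncard + 1 := Set.ncard_insert_le _ _
      _ = {t | P (f t)}.ncard := Set.ncard_sdiff_singleton_add_one (hy hPy)
  · exact Set.ncard_le_ncard ((setOf_update_subset _ P b fun h => absurd h hPy).trans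
      (setOf_update_subset f P a fun h => absurd h hz))

end UpdateCount

section Feasibility

variable [DecidableEq S] {M : Market S C R} {μ : Matching S C R}

lemma Feasible.update_update [Finite S] (hf : Feasible M μ) {s₃ s : S} {c : C}
    {r₃ r : Option R} (h₃ : μ s₃ = some (c, r₃)) (hr : r = r₃ ∨ r = none) :
    Feasible M (Function.update (Function.update μ s₃ none) s (some (c, r))) := by
  have hres : ∀ r₄ : R, r = some r₄ → r₃ = some r₄ := by
    rintro r₄ rfl
    exact hr.resolve_right (Option.some_ne_none r₄) |>.symm
  refine ⟨fun c' => ?_, fun r₄ => ?_, fun t c₄ r₄ ht => ?_⟩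
  · refine le_trans ?_ (hf.1 c')
    refine ncard_setOf_update_update_le μ (fun x => ∃ ρ, x = some (c', ρ)) s₃ (by simp) ?_
    rintro ⟨ρ, hρ⟩
    cases hρ
    exact ⟨r₃, h₃⟩
  · refine le_trans ?_ (hf.2.1 r₄)
    refine ncard_setOf_update_update_le μ (fun x => ∃ c₅, x = some (c₅, some r₄)) s₃ (by simp) ?_
    rintro ⟨c₅, hc₅⟩
    cases hc₅
    exact ⟨c, by rw [h₃, hres r₄ rfl]⟩
  · rcases eq_or_ne t s with rfl | hts
    · simp only [Function.update_self, Option.some.injEq, Prod.mk.injEq] at ht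
      obtain ⟨rfl, rfl⟩ := ht
      exact hf.2.2 s₃ c r₄ (by rw [h₃, hres r₄ rfl])
    · rcases eq_or_ne t s₃ with rfl | hts₃
      · simp [Function.update_of_ne hts] at ht
      · simp only [Function.update_of_ne hts, Function.update_of_ne hts₃] at ht
        exact hf.2.2 t c₄ r₄ ht

lemma Feasible.update_none_of_eq [Finite S] (hf : Feasible M μ) {a : S} {c : C} {r : Option R}
    (ha : μ a = some (c, r)) : Feasible M (Function.update μ a (some (c, none))) := by
  simpa using hf.update_update (s := a) ha (Or.inr rfl)

lemma Feasible.update_none_of_lt [Finite S] (hf : Feasible M μ) (a : S) {c : C}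
    (hc : collegeCount μ c < M.qC c) : Feasible M (Function.update μ a (some (c, none))) := by
  refine ⟨fun c' => ?_, fun r₄ => ?_, fun t c₄ r₄ ht => ?_⟩
  · rcases eq_or_ne c' c with rfl | hc'
    · calc collegeCount (Function.update μ a (some (c', none))) c'
          ≤ collegeCount μ c' + 1 := (Set.ncard_le_ncard
            (setOf_update_subset_insert μ (fun x => ∃ ρ, x = some (c', ρ)) a)).trans
            (Set.ncard_insert_le _ _)
        _ ≤ M.qC c' := hc
    · refine le_trans (Set.ncard_le_ncard ?_) (hf.1 c')
      exact setOf_update_subset μ (fun x => ∃ ρ, x = some (c', ρ)) a (by simp [Ne.symm hc'])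
  · refine le_trans (Set.ncard_le_ncard ?_) (hf.2.1 r₄)
    exact setOf_update_subset μ (fun x => ∃ c₅, x = some (c₅, some r₄)) a (by simp)
  · rcases eq_or_ne t a with rfl | hta
    · simp at ht
    · exact hf.2.2 t c₄ r₄ (by simpa [Function.update_of_ne hta] using ht)

lemma collegeCount_lt_of_feasible_update [Finite S] {a : S} {c : C} {x : Option R}
    (hf : Feasible M (Function.update μ a (some (c, x)))) (ha : ¬ ∃ ρ, μ a = some (c, ρ)) :
    collegeCount μ c < M.qC c := by
  calc collegeCount μ c < collegeCount μ c + 1 := Nat.lt_succ_self _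
    _ = (insert a {t | ∃ ρ, μ t = some (c, ρ)}).ncard :=
        (Set.ncard_insert_of_notMem (s := {t | ∃ ρ, μ t = some (c, ρ)}) ha).symm
    _ ≤ collegeCount (Function.update μ a (some (c, x))) c := Set.ncard_le_ncard
        (insert_setOf_subset_update μ (fun x => ∃ ρ, x = some (c, ρ)) a ⟨x, rfl⟩)
    _ ≤ M.qC c := hf.1 c

end Feasibility

section DirectEnvyStability

def Demands (M : Market S C R) (μ : Matching S C R) (s : S) (c : C) (r : Option R) : Prop :=
  M.prS s (some (c, r)) (μ s)

variable {M : Market S C R} {μ : Matching S C R}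

lemma Demands.ne {s : S} {c : C} {r : Option R} (hd : Demands M μ s c r) : μ s ≠ some (c, r) :=
  fun he => by
    unfold Demands at hd
    rw [he] at hd
    exact irrefl_of (M.prS s) _ hd

lemma ne_none_of_prS_of_indRational (hIR : IndRational M μ) {s : S} {x : Option (C × Option R)}
    (hx : M.prS s x (μ s)) : x ≠ none := by
  rintro rfl
  cases hμ : μ s with
  | none => exact irrefl_of (M.prS s) _ (hμ ▸ hx)
  | some y => exact asymm_of (M.prS s) (hIR s y hμ) (hμ ▸ hx)

variable [DecidableEq S]

lemma Demands.wasteBlocks {s : S} {c : C} {r : Option R} (hd : Demands M μ s c r)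
    (hf : Feasible M (Function.update μ s (some (c, r)))) : WasteBlocks M μ s c r :=
  ⟨hd.ne, hd, hf⟩

lemma Demands.directEnvyBlocks [Finite S] (hf : Feasible M μ) {s s₃ : S} {c : C}
    {r r₃ : Option R} (hd : Demands M μ s c r) (h₃ : μ s₃ = some (c, r₃)) (hpr : M.prC c s s₃)
    (hr : r = r₃ ∨ r = none) : DirectEnvyBlocks M μ s c r :=
  ⟨s₃, r₃, ⟨hd.ne, h₃, hd, hpr, hf.update_update h₃ hr⟩, hr⟩

/-- The dominating contract `(s, c, r)` of a waste-blocking `(s₀, c, x)` direct-envies some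
`(s₃, c, r₃)` after `s₀` moves. If `s₃ ≠ s₀` that envy already exists in `μ`; if `s₃ = s₀` and
`r = none`, either `s₀` already held a seat at `c` (envy in `μ`) or `c` had a free seat (waste). -/
theorem DirectEnvyStable.exists_demands_prC_of_wasteBlocks [Finite S]
    (h : DirectEnvyStable M μ) {s₀ : S} {c : C} {x : Option R} (hw : WasteBlocks M μ s₀ c x) :
    ∃ r₁, x = some r₁ ∧ ∃ s, Demands M μ s c x ∧ M.prC c s s₀ := by
  obtain ⟨hF, -, hDEB, hdom⟩ := h
  obtain ⟨s, r, -, hnWB, hnDEB, s₃, r₃, ⟨-, hν₃, hνd, hpr, -⟩, hr⟩ := hdom s₀ c x hw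
  by_cases hs₃ : s₃ = s₀
  · subst hs₃
    obtain rfl : r₃ = x := by simpa using hν₃.symm
    have hs : s ≠ s₃ := fun he => irrefl_of (M.prC c) s (he ▸ hpr)
    have hd : Demands M μ s c r := by simpa [Demands, Function.update_of_ne hs] using hνd
    by_cases hrn : r = none
    · subst hrn
      exfalso
      by_cases hat : ∃ ρ, μ s₃ = some (c, ρ)
      · obtain ⟨ρ, hρ⟩ := hat
        exact hDEB s c none (hd.directEnvyBlocks hF hρ hpr (Or.inr rfl))
      · exact hnWB (hd.wasteBlocks (hF.update_none_of_lt s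
          (collegeCount_lt_of_feasible_update hw.2.2 hat)))
    · obtain rfl : r = r₃ := hr.resolve_right hrn
      obtain ⟨r₁, rfl⟩ := Option.ne_none_iff_exists'.mp hrn
      exact ⟨r₁, rfl, s, hd, hpr⟩
  · have hμ₃ : μ s₃ = some (c, r₃) := by simpa [Function.update_of_ne hs₃] using hν₃
    by_cases hs : s = s₀
    · subst hs
      have hd : Demands M μ s c r :=
        trans_of (M.prS s) (by simpa using hνd) hw.2.1
      exact absurd (hd.directEnvyBlocks hF hμ₃ hpr hr) (hDEB s c r)
    · have hd : Demands M μ s c r := by simpa [Demands, Function.update_of_ne hs] using hνd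
      exact absurd (hd.directEnvyBlocks hF hμ₃ hpr hr) hnDEB

theorem DirectEnvyStable.prC_of_demands [Finite S] (h : DirectEnvyStable M μ) {s s' : S} {c : C}
    {r : Option R} (hm : μ s = some (c, r)) (hdem : Demands M μ s' c r ∨ Demands M μ s' c none) :
    M.prC c s s' := by
  have hx : ∃ x, Demands M μ s' c x ∧ (x = r ∨ x = none) := by
    rcases hdem with hd | hd
    exacts [⟨r, hd, Or.inl rfl⟩, ⟨none, hd, Or.inr rfl⟩]
  obtain ⟨x, hd, hxr⟩ := hx
  have hne : s' ≠ s := by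
    rintro rfl
    rcases hxr with rfl | rfl
    · exact hd.ne hm
    · obtain ⟨r₁, hr₁, -⟩ :=
        h.exists_demands_prC_of_wasteBlocks (hd.wasteBlocks (h.1.update_none_of_eq hm))
      exact Option.some_ne_none r₁ hr₁.symm
  rcases trichotomous_of (M.prC c) s s' with hlt | heq | hgt
  · exact hlt
  · exact absurd heq.symm hne
  · exact absurd (hd.directEnvyBlocks h.1 hm hgt hxr) (h.2.2.1 s' c x)

end DirectEnvyStability

section Induced

variable {M : Market S C R} {K K₁ K₂ : C → Option R → ℕ} {μ μ₁ μ₂ : Matching S C R}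

lemma isInduced_iff : IsInduced M K μ ↔ ∀ s,
    (∀ c r, μ s = some (c, r) → Permitted M K s c r ∧ Acceptable M s c r) ∧
      ∀ c r, Permitted M K s c r → ¬ Demands M μ s c r := by
  refine forall_congr' fun s => ?_
  cases hμ : μ s with
  | none => simp [Demands, Acceptable, hμ]
  | some y =>
    obtain ⟨c₀, r₀⟩ := y
    simp only [Option.some.injEq, Prod.mk.injEq, and_imp, forall_apply_eq_imp_iff, forall_eq',
      reduceCtorEq, IsEmpty.forall_iff, and_true, and_assoc, Demands, hμ]
    refine and_congr_right fun _ => and_congr_right fun ha₀ => ⟨fun hbest => ?_, fun hnd => ?_⟩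
    · intro c r hp hd
      have hne : (c, r) ≠ (c₀, r₀) := fun he => irrefl_of (M.prS s) _ (he ▸ hd)
      exact asymm_of (M.prS s) hd (hbest c r hp (trans_of (M.prS s) hd ha₀) hne)
    · intro c r hp _ hne
      rcases trichotomous_of (M.prS s) (some (c₀, r₀)) (some (c, r)) with hlt | heq | hgt
      · exact hlt
      · exact absurd (Option.some.inj heq).symm hne
      · exact absurd hgt (hnd c r hp)

lemma IsInduced.permitted (h : IsInduced M K μ) {s : S} {c : C} {r : Option R}
    (hm : μ s = some (c, r)) : Permitted M K s c r :=
  ((h s).1 c r hm).1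

lemma IsInduced.indRational (h : IsInduced M K μ) : IndRational M μ :=
  fun s _ hm => ((h s).1 _ _ hm).2.1

lemma IsInduced.not_demands (h : IsInduced M K μ) {s : S} {c : C} {r : Option R}
    (hp : Permitted M K s c r) : ¬ Demands M μ s c r :=
  (isInduced_iff.mp h s).2 c r hp

lemma IsInduced.not_prS (h₁ : IsInduced M K₁ μ₁) (h₂ : IsInduced M K₂ μ₂) {s : S}
    (hp : ∀ c r, Permitted M K₁ s c r → Permitted M K₂ s c r) : ¬ M.prS s (μ₁ s) (μ₂ s) := by
  cases hμ₁ : μ₁ s with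
  | none => exact fun hlt => ne_none_of_prS_of_indRational h₂.indRational hlt rfl
  | some y => exact h₂.not_demands (hp _ _ (h₁.permitted hμ₁))

lemma IsInduced.apply_eq (h₁ : IsInduced M K₁ μ₁) (h₂ : IsInduced M K₂ μ₂) {s : S}
    (hp : ∀ c r, Permitted M K₁ s c r ↔ Permitted M K₂ s c r) : μ₁ s = μ₂ s := by
  rcases trichotomous_of (M.prS s) (μ₁ s) (μ₂ s) with hlt | heq | hgt
  · exact absurd hlt (h₁.not_prS h₂ fun c r => (hp c r).mp)
  · exact heq
  · exact absurd hgt (h₂.not_prS h₁ fun c r => (hp c r).mpr)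

lemma IsInduced.unique (h₁ : IsInduced M K μ₁) (h₂ : IsInduced M K μ₂) : μ₁ = μ₂ :=
  funext fun _ => h₁.apply_eq h₂ fun _ _ => Iff.rfl

end Induced

section Bump

variable [DecidableEq C] [DecidableEq R] {M : Market S C R} {K : C → Option R → ℕ} {c : C}
  {r : Option R}

lemma permitted_bump_iff {s : S} {c₂ : C} {r₂ : Option R} :
    Permitted M (bump K c r) s c₂ r₂ ↔ Permitted M K s c₂ r₂ ∨
      (studentRank M c₂ s = K c r ∧ c₂ = c ∧
        (r₂ = r ∨ (r₂ = none ∧ r ≠ none ∧ K c none = K c r))) := by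
  unfold Permitted bump
  split_ifs with hcond
  · obtain ⟨rfl, hr₂⟩ := hcond
    have hval : K c₂ r₂ = K c₂ r := by
      rcases hr₂ with rfl | ⟨rfl, -, heq⟩
      exacts [rfl, heq]
    rw [hval, Nat.lt_succ_iff_lt_or_eq]
    exact or_congr_right ⟨fun h => ⟨h, rfl, hr₂⟩, fun h => h.1⟩
  · exact ⟨Or.inl, fun h => h.resolve_right fun ⟨_, hc, hr₂⟩ => hcond ⟨hc, hr₂⟩⟩

lemma Permitted.bump {s : S} {c₂ : C} {r₂ : Option R} (hp : Permitted M K s c₂ r₂) :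
    Permitted M (bump K c r) s c₂ r₂ :=
  permitted_bump_iff.mpr (Or.inl hp)

variable {μ μ' : Matching S C R}

lemma IsInduced.apply_eq_of_bump [Finite S] (hK : IsInduced M K μ)
    (hK' : IsInduced M (bump K c r) μ') {s : S} (hs : studentRank M c s ≠ K c r) :
    μ' s = μ s :=
  hK'.apply_eq hK fun _ _ => permitted_bump_iff.trans
    (or_iff_left fun ⟨hrank, hc, _⟩ => hs (hc ▸ hrank))

lemma IsInduced.exists_bump_apply_eq (hK : IsInduced M K μ) (hK' : IsInduced M (bump K c r) μ')
    {s : S} {x : Option R} (hd : Demands M μ s c x) (hp : Permitted M (bump K c r) s c x) :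
    ∃ x', (x' = r ∨ x' = none) ∧ Demands M μ s c x' ∧ μ' s = some (c, x') := by
  have himp : M.prS s (μ' s) (μ s) := by
    rcases trichotomous_of (M.prS s) (some (c, x)) (μ' s) with hlt | heq | hgt
    · exact absurd hlt (hK'.not_demands hp)
    · exact heq ▸ hd
    · exact trans_of (M.prS s) hgt hd
  obtain ⟨⟨c', x'⟩, hμ'⟩ := Option.ne_none_iff_exists'.mp
    (ne_none_of_prS_of_indRational hK.indRational himp)
  have hd' : Demands M μ s c' x' := by rwa [hμ'] at himp
  rcases permitted_bump_iff.mp (hK'.permitted hμ') with hpK | ⟨-, rfl, hx'⟩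
  · exact absurd hd' (hK.not_demands hpK)
  · exact ⟨x', hx'.imp_right And.left, hd', hμ'⟩

end Bump

section CanonicalCutoffs

variable [Fintype S] {M : Market S C R} {μ : Matching S C R} {c : C} {r : Option R}

lemma IsCutoffProfile.le_none {K : C → Option R → ℕ} (hK : IsCutoffProfile S K) (c : C)
    (r : Option R) : K c r ≤ K c none := by
  cases r with
  | none => exact le_rfl
  | some r => exact hK.2 c r

noncomputable def canonicalCutoffs (M : Market S C R) (μ : Matching S C R) (c : C)
    (r : Option R) : ℕ :=
  sInf (insert (Fintype.card S)
    (studentRank M c '' {s | Demands M μ s c r ∨ Demands M μ s c none}))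

lemma le_canonicalCutoffs_iff {n : ℕ} : n ≤ canonicalCutoffs M μ c r ↔
    n ≤ Fintype.card S ∧
      ∀ s, Demands M μ s c r ∨ Demands M μ s c none → n ≤ studentRank M c s := by
  simp [canonicalCutoffs, le_csInf_iff'' (Set.insert_nonempty _ _)]

lemma canonicalCutoffs_le_card : canonicalCutoffs M μ c r ≤ Fintype.card S :=
  (le_canonicalCutoffs_iff.mp le_rfl).1

lemma canonicalCutoffs_le_studentRank {s : S} (hd : Demands M μ s c r ∨ Demands M μ s c none) :
    canonicalCutoffs M μ c r ≤ studentRank M c s :=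
  (le_canonicalCutoffs_iff.mp le_rfl).2 s hd

lemma canonicalCutoffs_le_none : canonicalCutoffs M μ c r ≤ canonicalCutoffs M μ c none :=
  le_canonicalCutoffs_iff.mpr ⟨canonicalCutoffs_le_card, fun _ hd =>
    canonicalCutoffs_le_studentRank (Or.inr (hd.elim id id))⟩

lemma exists_studentRank_eq_canonicalCutoffs (hlt : canonicalCutoffs M μ c r < Fintype.card S) :
    ∃ s, studentRank M c s = canonicalCutoffs M μ c r ∧
      (Demands M μ s c r ∨ Demands M μ s c none) := by
  rcases Nat.sInf_mem (Set.insert_nonempty (Fintype.card S)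
      (studentRank M c '' {s | Demands M μ s c r ∨ Demands M μ s c none})) with heq | ⟨s, hd, hs⟩
  · exact absurd heq hlt.ne
  · exact ⟨s, hs, hd⟩

lemma isCutoffProfile_canonicalCutoffs : IsCutoffProfile S (canonicalCutoffs M μ) :=
  ⟨fun _ _ => canonicalCutoffs_le_card, fun _ _ => canonicalCutoffs_le_none⟩

lemma IsInduced.le_canonicalCutoffs {K : C → Option R → ℕ} (hK : IsCutoffProfile S K)
    (h : IsInduced M K μ) : K c r ≤ canonicalCutoffs M μ c r := by
  refine le_canonicalCutoffs_iff.mpr ⟨hK.1 c r, fun s hd => ?_⟩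
  rcases hd with hd | hd
  · exact not_lt.mp fun hp => h.not_demands hp hd
  · exact (hK.le_none c r).trans (not_lt.mp fun hp => h.not_demands hp hd)

lemma IsInduced.bump_of_lt_canonicalCutoffs [DecidableEq C] [DecidableEq R]
    {K : C → Option R → ℕ} (h : IsInduced M K μ)
    (hlt : K c r < canonicalCutoffs M μ c r) : IsInduced M (bump K c r) μ := by
  refine isInduced_iff.mpr fun s => ⟨fun c₂ r₂ hm => ⟨(h.permitted hm).bump, h.indRational s _ hm⟩,
    fun c₂ r₂ hp hd => ?_⟩
  rcases permitted_bump_iff.mp hp with hpK | ⟨hrank, rfl, hr₂⟩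
  · exact h.not_demands hpK hd
  · have : canonicalCutoffs M μ c₂ r ≤ studentRank M c₂ s := by
      refine canonicalCutoffs_le_studentRank ?_
      rcases hr₂ with rfl | ⟨rfl, -⟩
      exacts [Or.inl hd, Or.inr hd]
    omega

variable [DecidableEq S]

theorem DirectEnvyStable.isInduced_canonicalCutoffs (h : DirectEnvyStable M μ) :
    IsInduced M (canonicalCutoffs M μ) μ := by
  refine isInduced_iff.mpr fun s => ⟨fun c r hm => ⟨?_, h.2.1 s _ hm⟩, fun c r hp hd => ?_⟩
  · exact le_canonicalCutoffs_iff.mpr ⟨studentRank_lt_card M s,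
      fun s' hd => studentRank_lt_of_prC M (h.prC_of_demands hm hd)⟩
  · exact (canonicalCutoffs_le_studentRank (Or.inl hd)).not_gt hp

variable [DecidableEq C] [DecidableEq R]

theorem DirectEnvyStable.not_feasible_of_isInduced_bump (h : DirectEnvyStable M μ)
    (hlt : canonicalCutoffs M μ c r < Fintype.card S) {μ' : Matching S C R}
    (hμ' : IsInduced M (bump (canonicalCutoffs M μ) c r) μ') : ¬ Feasible M μ' := by
  have hK := h.isInduced_canonicalCutoffs
  obtain ⟨s₀, hrank, hd₀⟩ := exists_studentRank_eq_canonicalCutoffs hlt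
  have hx : ∃ x, Demands M μ s₀ c x ∧ Permitted M (bump (canonicalCutoffs M μ) c r) s₀ c x := by
    rcases hd₀ with hd | hd
    · exact ⟨r, hd, permitted_bump_iff.mpr (Or.inr ⟨hrank, rfl, Or.inl rfl⟩)⟩
    · refine ⟨none, hd, permitted_bump_iff.mpr (Or.inr ⟨hrank, rfl, ?_⟩)⟩
      by_cases hr : r = none
      · exact Or.inl hr.symm
      · exact Or.inr ⟨rfl, hr, le_antisymm
          (hrank ▸ canonicalCutoffs_le_studentRank (Or.inr hd)) canonicalCutoffs_le_none⟩
  obtain ⟨x, hd, hp⟩ := hx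
  obtain ⟨x', hx', hd', hμ's₀⟩ := hK.exists_bump_apply_eq hμ' hd hp
  have hμ'_eq : μ' = Function.update μ s₀ (some (c, x')) := by
    funext s
    rcases eq_or_ne s s₀ with rfl | hs
    · simpa using hμ's₀
    · rw [Function.update_of_ne hs]
      exact hK.apply_eq_of_bump hμ' fun hrank' =>
        hs (studentRank_injective M (hrank'.trans hrank.symm))
  intro hfeas
  obtain ⟨r₁, rfl, s, hds, hpr⟩ :=
    h.exists_demands_prC_of_wasteBlocks (hd'.wasteBlocks (hμ'_eq ▸ hfeas))
  have hxr : some r₁ = r := hx'.resolve_right (Option.some_ne_none r₁)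
  have := canonicalCutoffs_le_studentRank (μ := μ) (Or.inl (hxr ▸ hds))
  have := studentRank_lt_of_prC M hpr
  omega

end CanonicalCutoffs

theorem directEnvyStable_unique_optimal_cutoffs_general
    {S C R : Type} [Fintype S] [DecidableEq S] [DecidableEq C] [DecidableEq R]
    (M : Market S C R) (μ : Matching S C R) (h : DirectEnvyStable M μ) :
    ∃! K : C → Option R → ℕ, OptimalCutoffs M K ∧ IsInduced M K μ := by
  have hind := h.isInduced_canonicalCutoffs
  refine ⟨canonicalCutoffs M μ, ⟨⟨isCutoffProfile_canonicalCutoffs,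
    fun μ₁ h₁ => h₁.unique hind ▸ h.1,
    fun c r hlt μ' hμ' => h.not_feasible_of_isInduced_bump hlt hμ'⟩, hind⟩, ?_⟩
  rintro K ⟨hK, hKμ⟩
  funext c r
  refine (hKμ.le_canonicalCutoffs hK.1).antisymm (not_lt.mp fun hlt => ?_)
  exact hK.2.2 c r (hlt.trans_le canonicalCutoffs_le_card) μ
    (hKμ.bump_of_lt_canonicalCutoffs hlt) h.1

/-- In any RRC market, every direct-envy stable matching is induced
by exactly one optimal cutoff profile. -/
theorem directEnvyStable_unique_optimal_cutoffs
    {S C R : Type} [Fintype S] [DecidableEq S] [Fintype C] [DecidableEq C]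
    [Fintype R] [DecidableEq R]
    (M : Market S C R) (μ : Matching S C R) (h : DirectEnvyStable M μ) :
    ∃! K : C → Option R → ℕ, OptimalCutoffs M K ∧ IsInduced M K μ :=
  directEnvyStable_unique_optimal_cutoffs_general M μ h

end RRC
end
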